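/- arXiv:math/0204354 — 4 statements merged into one kernel-verified Lean document; each statement's English description precedes it below -/
import Mathlib

section
/- Let σ be an involutive isometry of the weight space of a root system Φ with basis Δ such that σ(Φ) = Φ, and suppose for a simple root α ∈ Δ we have σ(ω_α) = -ω_{σ̄(α)} where σ̄ is an involution of a subset Δ₁ ⊆ Δ. Then for any integral weight λ with σ(λ) = -λ, λ is of the form λ = Σ_{α ∈ Δ₁} n_α ω_α with n_α ∈ ℤ and n_α = n_{σ̄(α)}. -/
/-! Split `λ` into its `Δ₀`- and `Δ₁`-parts. The spans of the two families of fundamental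
weights are `σ`-stable and independent, so the `Δ₀`-part of `λ` is itself special, hence zero.
For `j ∈ Δ₁`, the `ω_j`-coordinate of `σ λ` is `-n_{σ̄ j}`, and comparing with `-λ` gives
`n_j = n_{σ̄ j}`. -/

open Submodule

theorem Submodule.map_eq_smul_left_of_disjoint {R M : Type*} [CommRing R] [AddCommGroup M]
    [Module R M] {p q : Submodule R M} (hpq : Disjoint p q) {f : M →ₗ[R] M}
    (hp : p ≤ p.comap f) (hq : q ≤ q.comap f) {y z : M} (hy : y ∈ p) (hz : z ∈ q) (c : R)
    (h : f (y + z) = c • (y + z)) : f y = c • y := by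
  have hy' : f y - c • y ∈ p := p.sub_mem (hp hy) (p.smul_mem c hy)
  have hz' : -(f z - c • z) ∈ q := q.neg_mem (q.sub_mem (hq hz) (q.smul_mem c hz))
  have hsum : f y - c • y = -(f z - c • z) := by
    rw [map_add, smul_add] at h
    rw [eq_neg_iff_add_eq_zero, ← sub_eq_zero.2 h]
    abel
  exact sub_eq_zero.1 (disjoint_def'.1 hpq _ hy' _ hz' hsum)

theorem Module.Basis.sum_indicator_smul_mem_span_image {ι R M : Type*} [Fintype ι]
    [CommRing R] [AddCommGroup M] [Module R M] (b : Module.Basis ι R M) (s : Set ι)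
    (c : ι → R) : ∑ i, s.indicator c i • b i ∈ span R (b '' s) := by
  rw [b.mem_span_image, ← Finsupp.fun_support_eq, b.repr_sum_self]
  exact Set.support_indicator_subset

section Involution

variable {R E ι : Type*} [CommRing R] [AddCommGroup E] [Module R E] (b : Module.Basis ι R E)
  (σ : E →ₗ[R] E) {Δ₁ : Set ι} {sb : ι → ι}

theorem span_basis_compl_le_comap (hpres : ∀ i ∉ Δ₁, σ (b i) ∈ span R (b '' Δ₁ᶜ)) :
    span R (b '' Δ₁ᶜ) ≤ (span R (b '' Δ₁ᶜ)).comap σ :=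
  span_le.2 <| by rintro _ ⟨i, hi, rfl⟩; exact hpres i hi

theorem span_basis_le_comap_of_map_eq_neg (hsb₁ : ∀ i ∈ Δ₁, sb i ∈ Δ₁)
    (hσω : ∀ i ∈ Δ₁, σ (b i) = - b (sb i)) :
    span R (b '' Δ₁) ≤ (span R (b '' Δ₁)).comap σ :=
  span_le.2 <| by
    rintro _ ⟨i, hi, rfl⟩
    rw [SetLike.mem_coe, mem_comap, hσω i hi]
    exact neg_mem (subset_span (Set.mem_image_of_mem b (hsb₁ i hi)))

theorem repr_map_basis_apply_of_mem [DecidableEq ι] (hsb₁ : ∀ i ∈ Δ₁, sb i ∈ Δ₁)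
    (hsb₂ : ∀ i ∈ Δ₁, sb (sb i) = i) (hσω : ∀ i ∈ Δ₁, σ (b i) = - b (sb i))
    (hpres : ∀ i ∉ Δ₁, σ (b i) ∈ span R (b '' Δ₁ᶜ)) {j : ι} (hj : j ∈ Δ₁) (i : ι) :
    b.repr (σ (b i)) j = -if i = sb j then 1 else 0 := by
  by_cases hi : i ∈ Δ₁
  · have : sb i = j ↔ i = sb j :=
      ⟨fun h => h ▸ (hsb₂ i hi).symm, fun h => h ▸ hsb₂ j hj⟩
    simp [hσω i hi, Finsupp.single_apply, this]
  · have hji : j ∉ (b.repr (σ (b i))).support := fun h =>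
      b.mem_span_image.1 (hpres i hi) h hj
    have hne : i ≠ sb j := fun h => hi (h ▸ hsb₁ j hj)
    simpa [hne] using hji

theorem repr_map_sum_apply_of_mem [Fintype ι] (hsb₁ : ∀ i ∈ Δ₁, sb i ∈ Δ₁)
    (hsb₂ : ∀ i ∈ Δ₁, sb (sb i) = i) (hσω : ∀ i ∈ Δ₁, σ (b i) = - b (sb i))
    (hpres : ∀ i ∉ Δ₁, σ (b i) ∈ span R (b '' Δ₁ᶜ)) {j : ι} (hj : j ∈ Δ₁) (c : ι → R) :
    b.repr (σ (∑ i, c i • b i)) j = -c (sb j) := by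
  classical
  simp [map_sum, Finsupp.finsetSum_apply,
    repr_map_basis_apply_of_mem b σ hsb₁ hsb₂ hσω hpres hj]

end Involution

theorem stmt_2_general {E : Type*} [AddCommGroup E] [Module ℝ E]
    {ι : Type*} [Fintype ι] (b : Module.Basis ι ℝ E)   -- fundamental weights ω_i = b i
    (σ : E →ₗ[ℝ] E)
    (Δ₁ : Set ι) (sb : ι → ι)
    (hsb₁ : ∀ i ∈ Δ₁, sb i ∈ Δ₁) (hsb₂ : ∀ i ∈ Δ₁, sb (sb i) = i)
    (hσω : ∀ i ∈ Δ₁, σ (b i) = - b (sb i))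
    (hpres : ∀ i ∉ Δ₁, σ (b i) ∈ Submodule.span ℝ (b '' {j | j ∉ Δ₁}))
    (hno : ∀ v ∈ Submodule.span ℝ (b '' {j | j ∉ Δ₁}), σ v = -v → v = 0)
    (lam : E) (n : ι → ℤ)
    (hlam : lam = ∑ i, (n i : ℝ) • b i)
    (hspecial : σ lam = -lam) :
    (∀ i ∉ Δ₁, n i = 0) ∧ (∀ i ∈ Δ₁, n i = n (sb i)) := by
  classical
  set c : ι → ℝ := fun i => n i
  set lam₀ := ∑ i, Δ₁ᶜ.indicator c i • b i
  set lam₁ := ∑ i, Δ₁.indicator c i • b i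
  have hsplit : lam = lam₀ + lam₁ := by
    simp only [hlam, c, lam₀, lam₁, ← Finset.sum_add_distrib, ← add_smul,
      Set.indicator_compl_add_self_apply]
  have hmem₀ := b.sum_indicator_smul_mem_span_image Δ₁ᶜ c
  have hdisj : Disjoint (span ℝ (b '' Δ₁ᶜ)) (span ℝ (b '' Δ₁)) :=
    b.linearIndependent.disjoint_span_image disjoint_compl_left
  have hσ₀ : σ lam₀ = -lam₀ := by
    simpa only [neg_one_smul] using map_eq_smul_left_of_disjoint hdisj
      (span_basis_compl_le_comap b σ hpres) (span_basis_le_comap_of_map_eq_neg b σ hsb₁ hσω)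
      hmem₀ (b.sum_indicator_smul_mem_span_image Δ₁ c) (-1)
      (by rw [← hsplit, hspecial, neg_one_smul])
  have hlam₀ : lam₀ = 0 := hno _ hmem₀ hσ₀
  refine ⟨fun i hi => ?_, fun j hj => ?_⟩
  · have := DFunLike.congr_fun (congrArg b.repr hlam₀) i
    rw [b.repr_sum_self] at this
    simpa [hi, c] using this
  · have := DFunLike.congr_fun (congrArg b.repr hspecial) j
    rw [hlam, repr_map_sum_apply_of_mem b σ hsb₁ hsb₂ hσω hpres hj, map_neg, Finsupp.neg_apply,
      b.repr_sum_self] at this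
    exact_mod_cast (neg_inj.1 this).symm

/-- if `σ` is an involution of the weight space with
`σ(ω_i) = -ω_{σ̄(i)}` for `i ∈ Δ₁`, `σ` preserving the span of the fundamental
weights for `Δ₀ = Δ \ Δ₁` with trivial `-1` eigenspace there, then any integral
weight `λ` with `σ λ = -λ` is `λ = Σ_{i ∈ Δ₁} n_i ω_i` with `n_i = n_{σ̄(i)}`,
i.e. the coefficients of `λ` vanish outside `Δ₁` and are `σ̄`-symmetric. -/
theorem stmt_2 {E : Type*} [AddCommGroup E] [Module ℝ E]
    {ι : Type*} [Fintype ι] (b : Module.Basis ι ℝ E)   -- fundamental weights ω_i = b i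
    (σ : E →ₗ[ℝ] E) (hinv : ∀ x, σ (σ x) = x)
    (Δ₁ : Set ι) (sb : ι → ι)
    (hsb₁ : ∀ i ∈ Δ₁, sb i ∈ Δ₁) (hsb₂ : ∀ i ∈ Δ₁, sb (sb i) = i)
    (hσω : ∀ i ∈ Δ₁, σ (b i) = - b (sb i))
    (hpres : ∀ i ∉ Δ₁, σ (b i) ∈ Submodule.span ℝ (b '' {j | j ∉ Δ₁}))
    (hno : ∀ v ∈ Submodule.span ℝ (b '' {j | j ∉ Δ₁}), σ v = -v → v = 0)
    (lam : E) (n : ι → ℤ)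
    (hlam : lam = ∑ i, (n i : ℝ) • b i)
    (hspecial : σ lam = -lam) :
    (∀ i ∉ Δ₁, n i = 0) ∧ (∀ i ∈ Δ₁, n i = n (sb i)) :=
  stmt_2_general b σ Δ₁ sb hsb₁ hsb₂ hσω hpres hno lam n hlam hspecial
end

section
/- (PRV for the restricted lattice, reduced case.) Let Φ be a root system with involution σ as in a symmetric pair, with reduced restricted root system Φ̃ having simple roots α̃₁,…,α̃_ℓ; let Ω₁⁺ be the set of integral weights of Φ̃ that are dominant. For ν, λ, μ ∈ Ω₁⁺ with λ + μ - ν ∈ ℕ·{α̃₁,…,α̃_ℓ}, there exist λ', μ' ∈ Ω₁⁺ with λ - λ', μ - μ' ∈ ℕ·{α̃₁,…,α̃_ℓ} such that V_ν appears in the decomposition of V_{λ'} ⊗ V_{μ'} as modules for the ambient group G̃. -/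
/-- PRV for the restricted lattice, reduced case: `Ω₁⁺` is the set
of dominant integral weights of the (reduced) restricted root system `Φ̃` with
simple roots `α̃₁, …, α̃_ℓ`.  For `ν, λ, μ ∈ Ω₁⁺` with
`λ + μ - ν ∈ ℕ·{α̃₁,…,α̃_ℓ}` there are `λ', μ' ∈ Ω₁⁺` with `λ - λ'` and
`μ - μ'` in `ℕ·{α̃₁,…,α̃_ℓ}` such that `V_ν` occurs in `V_{λ'} ⊗ V_{μ'}` as
modules for the ambient group `G̃`.  The key inputs (weights of irreducible
modules of a simply connected group `K` with root system `Φ̃`, the PRV theorem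
for `G̃`, and the compatibility of dominant representatives) are encoded as
hypotheses. -/
theorem stmt_8 {E : Type*} [AddCommGroup E] [Module ℝ E] {ℓ : ℕ}
    (W : Subgroup (E ≃ₗ[ℝ] E))
    (dominant : Set E)                  -- dominant weights Λ⁺ of G̃
    (Om : Set E)                        -- Ω₁⁺ = Ω₁ ∩ Λ⁺
    (at' : Fin ℓ → E)                   -- the simple restricted roots α̃_i
    (wtK : E → Set E)                   -- weights of irreducible K-modules
    (occurs : E → E → E → Prop)         -- V_ν occurs in V_λ ⊗ V_μ over G̃
    (hOmdom : Om ⊆ dominant)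
    (haddOm : ∀ a ∈ Om, ∀ b ∈ Om, a + b ∈ Om)
    -- an element of Ω₁⁺ that is ≤_σ a highest weight is a weight of the K-module
    (hdomwtK : ∀ lam ∈ Om, ∀ nu ∈ Om,
      lam - nu ∈ AddSubmonoid.closure (Set.range at') → nu ∈ wtK lam)
    -- every weight of Ṽ_{λ+μ} is a sum of a weight of Ṽ_λ and one of Ṽ_μ
    (htensorK : ∀ lam ∈ Om, ∀ mu ∈ Om, ∀ x ∈ wtK (lam + mu),
      ∃ y ∈ wtK lam, ∃ z ∈ wtK mu, x = y + z)
    -- the W-dominant representative of a weight of Ṽ_λ lies in Ω₁⁺ and is ≤_σ λ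
    (hrepK : ∀ lam ∈ Om, ∀ x ∈ wtK lam, ∃ w : W,
      (w : E ≃ₗ[ℝ] E) x ∈ Om ∧
      lam - (w : E ≃ₗ[ℝ] E) x ∈ AddSubmonoid.closure (Set.range at'))
    -- the PRV theorem for G̃
    (hPRV : ∀ lam ∈ dominant, ∀ mu ∈ dominant, ∀ τ ε : W,
      (τ : E ≃ₗ[ℝ] E) lam + (ε : E ≃ₗ[ℝ] E) mu ∈ dominant →
      occurs ((τ : E ≃ₗ[ℝ] E) lam + (ε : E ≃ₗ[ℝ] E) mu) lam mu) :
    ∀ nu ∈ Om, ∀ lam ∈ Om, ∀ mu ∈ Om,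
      lam + mu - nu ∈ AddSubmonoid.closure (Set.range at') →
      ∃ lam' ∈ Om, ∃ mu' ∈ Om,
        lam - lam' ∈ AddSubmonoid.closure (Set.range at') ∧
        mu - mu' ∈ AddSubmonoid.closure (Set.range at') ∧
        occurs nu lam' mu' := by
  intro nu hnu lam hlam mu hmu hle
  have hlm : lam + mu ∈ Om := haddOm lam hlam mu hmu
  have hnuwt : nu ∈ wtK (lam + mu) := hdomwtK _ hlm nu hnu hle
  obtain ⟨y, hy, z, hz, hyz⟩ := htensorK lam hlam mu hmu nu hnuwt
  obtain ⟨w1, hw1Om, hw1le⟩ := hrepK lam hlam y hy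
  obtain ⟨w2, hw2Om, hw2le⟩ := hrepK mu hmu z hz
  refine ⟨_, hw1Om, _, hw2Om, hw1le, hw2le, ?_⟩
  have h1 : ((w1⁻¹ : W) : E ≃ₗ[ℝ] E) ((w1 : E ≃ₗ[ℝ] E) y) = y := by
    have : ((w1⁻¹ : W) : E ≃ₗ[ℝ] E) = ((w1 : W) : E ≃ₗ[ℝ] E)⁻¹ := rfl
    rw [this]; exact ((w1 : W) : E ≃ₗ[ℝ] E).symm_apply_apply y
  have h2 : ((w2⁻¹ : W) : E ≃ₗ[ℝ] E) ((w2 : E ≃ₗ[ℝ] E) z) = z := by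
    have : ((w2⁻¹ : W) : E ≃ₗ[ℝ] E) = ((w2 : W) : E ≃ₗ[ℝ] E)⁻¹ := rfl
    rw [this]; exact ((w2 : W) : E ≃ₗ[ℝ] E).symm_apply_apply z
  have key := hPRV _ (hOmdom hw1Om) _ (hOmdom hw2Om) w1⁻¹ w2⁻¹
    (by rw [h1, h2, ← hyz]; exact hOmdom hnu)
  rwa [h1, h2, ← hyz] at key
end

section
/- If α is an exceptional root (σ(i) ≠ i for α = α_i and (α, σ(α)) ≠ 0, with ⟨σ(α), α∨⟩ = 1), then the root β := -s_α(σ(α)) = α - σ(α) satisfies β̃ = 2α̃, i.e. β - σ(β) = 2(α - σ(α)); in particular 2α̃ is a restricted root and the restricted root system is non-reduced at α̃. -/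
open scoped RealInnerProductSpace

/-- if `α` is an exceptional root (so `⟨σ α, α∨⟩ = 1`), then the
root `β = -s_α(σ α)` equals `α - σ α` and satisfies `β̃ = β - σ β = 2α̃`, i.e.
`β - σ β = 2(α - σ α)`; in particular `2α̃` is a restricted root, so the
restricted root system is non-reduced at `α̃`. -/
theorem stmt_11 {E : Type*} [NormedAddCommGroup E] [InnerProductSpace ℝ E]
    (Φ : Set E) (σ : E →ₗ[ℝ] E)
    (hinv : ∀ x, σ (σ x) = x)
    (hiso : ∀ x y, ⟪σ x, σ y⟫ = ⟪x, y⟫)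
    (hΦ : σ '' Φ = Φ)
    (hneg : ∀ β ∈ Φ, -β ∈ Φ)
    -- Φ is closed under reflections s_γ(x) = x - ⟨x, γ∨⟩ γ
    (hrefl : ∀ γ ∈ Φ, ∀ x ∈ Φ, x - (2 * ⟪x, γ⟫ / ⟪γ, γ⟫) • γ ∈ Φ)
    (α : E) (hα : α ∈ Φ) (hα0 : α ≠ 0)
    (hpair : 2 * ⟪σ α, α⟫ / ⟪α, α⟫ = 1) :
    -(σ α - (2 * ⟪σ α, α⟫ / ⟪α, α⟫) • α) = α - σ α ∧
    α - σ α ∈ Φ ∧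
    (α - σ α) - σ (α - σ α) = (2 : ℝ) • (α - σ α) := by
  have hσα : σ α ∈ Φ := by rw [← hΦ]; exact ⟨α, hα, rfl⟩
  refine ⟨by rw [hpair, one_smul]; abel, ?_, ?_⟩
  · have h := hneg _ (hrefl α hα (σ α) hσα)
    rw [hpair, one_smul] at h
    simpa [neg_sub] using h
  · have : σ (α - σ α) = σ α - α := by rw [map_sub, hinv]
    rw [this, two_smul]; abel
end

section
/- Let A = ⊕_{λ ∈ L} A_λ be an L-graded commutative ring over a field k, where L ≅ ℤ^r is a lattice with fixed basis θ₁,…,θ_r, and suppose: A₀ = k, A_λ = 0 unless λ ∈ ℕθ₁ + ⋯ + ℕθ_r, each A_λ contains a distinguished subspace V_λ generating it in a suitable filtered sense, and the multiplication maps V_{λ'} ⊗ V_{θ_i} → V_{λ'+θ_i} are surjective. If additionally A_λ is spanned by products s^n · (elements of V_μ) for μ ≤ λ, then A is generated as a k-algebra by V_{θ₁} ∪ ⋯ ∪ V_{θ_r} together with the elements s₁,…,s_ℓ. (Abstract version of Lemma: generators of the ring of sections A(X).) -/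
/-- abstract version of the generation lemma for the ring of
sections `A(X)`: let `A = ⊕_{λ} A_λ` be a ring graded by `L ≅ ℤ^r` with
`A_0 = k`, `A_λ = 0` outside the cone `ℕθ₁ + ⋯ + ℕθ_r`, distinguished subspaces
`V_λ ⊆ A_λ` with surjective multiplications `V_{λ'} ⊗ V_{θ_i} → V_{λ'+θ_i}`,
and such that each `A_λ` is spanned by products `s^n · V_μ`.  Then `A` is
generated as a `k`-algebra by `V_{θ₁} ∪ ⋯ ∪ V_{θ_r}` and `s₁, …, s_ℓ`. -/
theorem stmt_13 {k A : Type*} [Field k] [CommRing A] [Algebra k A]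
    {r ℓ : ℕ}
    (𝒜 V : (Fin r → ℤ) → Submodule k A) (s : Fin ℓ → A)
    -- 𝒜 is an L-grading of A:
    (hgrade : ∀ lam mu, 𝒜 lam * 𝒜 mu ≤ 𝒜 (lam + mu))
    (htop : (⨆ lam, 𝒜 lam) = ⊤)
    -- A₀ = k:
    (hzero : 𝒜 0 ≤ (1 : Submodule k A))
    -- A_λ = 0 unless λ ∈ ℕθ₁ + ⋯ + ℕθ_r:
    (hsupp : ∀ lam : Fin r → ℤ, (∃ i, lam i < 0) → 𝒜 lam = ⊥)
    -- the distinguished subspaces: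
    (hV : ∀ lam, V lam ≤ 𝒜 lam)
    -- multiplication V_{λ'} ⊗ V_{θ_i} → V_{λ'+θ_i} is surjective:
    (hmul : ∀ lam : Fin r → ℤ, (∀ j, 0 ≤ lam j) → ∀ i : Fin r,
      V lam * V (Pi.single i 1) = V (lam + Pi.single i 1))
    -- A_λ is spanned by the products s^n · (elements of V_μ):
    (hspan : ∀ lam, 𝒜 lam ≤ Submodule.span k
      {x : A | ∃ (n : Fin ℓ → ℕ) (mu : Fin r → ℤ) (v : A),
        (∀ j, 0 ≤ mu j) ∧ v ∈ V mu ∧ x = (∏ i, s i ^ n i) * v}) :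
    Algebra.adjoin k
      ((⋃ i : Fin r, (V (Pi.single i 1) : Set A)) ∪ Set.range s) = ⊤ := by

  set S := Algebra.adjoin k ((⋃ i : Fin r, (V (Pi.single i 1) : Set A)) ∪ Set.range s) with hS
  have hVθ : ∀ i : Fin r, (V (Pi.single i 1) : Set A) ⊆ S := fun i =>
    (Set.subset_iUnion (fun i : Fin r => (V (Pi.single i 1) : Set A)) i).trans
      (Set.subset_union_left.trans Algebra.subset_adjoin)
  have hs : ∀ i, s i ∈ S := fun i => Algebra.subset_adjoin (Set.mem_union_right _ ⟨i, rfl⟩)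
  have key : ∀ n : ℕ, ∀ mu : Fin r → ℤ, (∀ j, 0 ≤ mu j) → (∑ j, (mu j).toNat) = n →
      (V mu : Set A) ⊆ S := by
    intro n
    induction n with
    | zero =>
      intro mu hmu hsum x hx
      have hmu0 : mu = 0 := by
        funext j
        have h1 := Finset.sum_eq_zero_iff.mp hsum j (Finset.mem_univ j)
        have h2 := hmu j
        simp only [Pi.zero_apply]
        omega
      subst hmu0
      obtain ⟨c, rfl⟩ := Submodule.mem_one.mp (hzero (hV 0 hx))
      exact S.algebraMap_mem c
    | succ n ih =>
      intro mu hmu hsum x hx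
      have hex : ∃ i, 0 < mu i := by
        by_contra h
        push_neg at h
        have hz : ∀ j, (mu j).toNat = 0 := fun j => by
          have := h j; have := hmu j; omega
        simp [hz] at hsum
      obtain ⟨i, hi⟩ := hex
      set mu' : Fin r → ℤ := mu - Pi.single i 1 with hmu'
      have hval : ∀ j, mu' j = mu j - (if j = i then 1 else 0) := by
        intro j; simp [hmu', Pi.single_apply]
      have hmu'nn : ∀ j, 0 ≤ mu' j := by
        intro j
        rw [hval j]
        split_ifs with hji
        · subst hji; omega
        · have := hmu j; omega
      have hsum' : (∑ j, (mu' j).toNat) = n := by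
        have : ∀ j, (mu j).toNat = (mu' j).toNat + (if j = i then 1 else 0) := by
          intro j
          have h1 := hval j
          have h2 := hmu'nn j
          have h3 := hmu j
          split_ifs with hji <;> omega
        rw [Finset.sum_congr rfl (fun j _ => this j), Finset.sum_add_distrib,
          Finset.sum_ite_eq' Finset.univ i (fun _ => 1)] at hsum
        simp at hsum
        omega
      have heq : mu' + Pi.single i 1 = mu := by
        funext j
        have := hval j
        simp only [Pi.add_apply, Pi.single_apply]
        split_ifs at this ⊢ <;> omega
      have hle : V mu ≤ Subalgebra.toSubmodule S := by
        rw [← heq, ← hmul mu' hmu'nn i]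
        exact Submodule.mul_le.mpr fun a ha b hb =>
          S.mul_mem (ih mu' hmu'nn hsum' ha) (hVθ i hb)
      exact hle hx
  rw [eq_top_iff]
  intro x _
  have hx : x ∈ ⨆ lam, 𝒜 lam := htop ▸ Submodule.mem_top
  refine (iSup_le (fun lam => ?_) : (⨆ lam, 𝒜 lam) ≤ Subalgebra.toSubmodule S) hx
  refine (hspan lam).trans (Submodule.span_le.mpr ?_)
  rintro y ⟨n, mu, v, hmu, hv, rfl⟩
  exact S.mul_mem (S.prod_mem fun i _ => S.pow_mem (hs i) _)
    (key (∑ j, (mu j).toNat) mu hmu rfl hv)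
end
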